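/- arXiv:2009.13605 — 5 statements merged into one kernel-verified Lean document; each statement's English description precedes it below -/
import Mathlib

section
/- Individual rationality of iMLCA: for every bidder i, the utility under the iMLCA outcome is nonnegative, i.e. v̲_i(a*_i) − p_i ≥ 0, where a* maximizes the total reported lower value over F_R, a^(−i) maximizes the total reported lower value of the bidders other than i over F_R, and p_i = Σ_{j≠i} v̲_j(a^(−i)_j) − Σ_{j≠i} v̲_j(a*_j). -/
/-- Individual rationality of iMLCA: for every bidder `i`, the utility under the
iMLCA outcome is nonnegative, i.e. `v̲_i(a*_i) − p_i ≥ 0`. -/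
theorem iMLCA_individual_rationality
    {N X : Type*} [Fintype N] [DecidableEq N] [Nonempty N]
    (FR : Finset (N → X)) (hFR : FR.Nonempty)
    (vlow : N → X → ℝ)
    -- reported lower values are nonnegative on all bundles appearing in allocations of F_R
    (hnonneg : ∀ (i : N) (x : X), (∃ a ∈ FR, ∃ j : N, a j = x) → 0 ≤ vlow i x)
    -- a* maximizes the total reported lower value over F_R
    (astar : N → X) (hastar : astar ∈ FR)
    (hastar_max : ∀ a ∈ FR, (∑ j, vlow j (a j)) ≤ ∑ j, vlow j (astar j))
    -- a^(−i) maximizes the total reported lower value of bidders other than i over F_R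
    (amarg : N → (N → X)) (hamarg : ∀ i : N, amarg i ∈ FR)
    (hamarg_max : ∀ i : N, ∀ a ∈ FR,
      (∑ j ∈ Finset.univ.erase i, vlow j (a j)) ≤
        ∑ j ∈ Finset.univ.erase i, vlow j (amarg i j))
    -- the iMLCA payment of bidder i
    (p : N → ℝ)
    (hp : ∀ i : N,
      p i = (∑ j ∈ Finset.univ.erase i, vlow j (amarg i j)) -
            ∑ j ∈ Finset.univ.erase i, vlow j (astar j)) :
    ∀ i : N, vlow i (astar i) - p i ≥ 0 := by
  intro i
  have h1 : (∑ j ∈ Finset.univ.erase i, vlow j (amarg i j)) ≤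
      ∑ j, vlow j (amarg i j) := by
    have := Finset.add_sum_erase Finset.univ (fun j => vlow j (amarg i j))
      (Finset.mem_univ i)
    have hnn : 0 ≤ vlow i (amarg i i) :=
      hnonneg i _ ⟨amarg i, hamarg i, i, rfl⟩
    linarith
  have h2 : (∑ j, vlow j (amarg i j)) ≤ ∑ j, vlow j (astar j) :=
    hastar_max _ (hamarg i)
  have h3 := Finset.add_sum_erase Finset.univ (fun j => vlow j (astar j))
    (Finset.mem_univ i)
  rw [hp i]
  linarith
end

section
/- Efficiency-gap bound from the perturbed valuation: if each bidder's true value lies within the reported bounds on all reported bundles, then for every allocation a ∈ F_R the true social welfare satisfies v(a) − v(a̲) ≤ ṽ(ã) − v̲(a̲), where a̲ maximizes the total lower reported value over F_R, ṽ is the perturbed valuation with respect to a̲, and ã maximizes the total perturbed valuation over F_R. -/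
/-- Efficiency-gap bound from the perturbed valuation: if each bidder's true value
lies within the reported bounds on all reported bundles, then for every allocation
`a ∈ F_R`, `v(a) − v(a̲) ≤ ṽ(ã) − v̲(a̲)`. -/
theorem efficiency_gap_bound
    {N X : Type*} [Fintype N] [Nonempty N] [DecidableEq X]
    (FR : Finset (N → X)) (hFR : FR.Nonempty)
    (v vlow vup : N → X → ℝ)
    -- truthful bounds on all bundles appearing in allocations of F_R
    (hbounds : ∀ (i : N) (x : X), (∃ a ∈ FR, ∃ j : N, a j = x) →
      vlow i x ≤ v i x ∧ v i x ≤ vup i x)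
    -- a̲ maximizes the total lower reported value over F_R
    (alow : N → X) (halow : alow ∈ FR)
    (halow_max : ∀ a ∈ FR, (∑ i, vlow i (a i)) ≤ ∑ i, vlow i (alow i))
    -- ṽ is the perturbed valuation with respect to a̲
    (vtil : N → X → ℝ)
    (hvtil : ∀ (i : N) (x : X), vtil i x = if x = alow i then vlow i x else vup i x)
    -- ã maximizes the total perturbed valuation over F_R
    (atil : N → X) (hatil : atil ∈ FR)
    (hatil_max : ∀ a ∈ FR, (∑ i, vtil i (a i)) ≤ ∑ i, vtil i (atil i)) :
    ∀ a ∈ FR,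
      (∑ i, v i (a i)) - (∑ i, v i (alow i)) ≤
        (∑ i, vtil i (atil i)) - ∑ i, vlow i (alow i) := by
  intro a ha
  have key : ∀ i : N, v i (a i) - v i (alow i) ≤ vtil i (a i) - vlow i (alow i) := by
    intro i
    rw [hvtil]
    by_cases h : a i = alow i
    · simp [h]
    · simp only [if_neg h]
      have h1 := hbounds i (a i) ⟨a, ha, i, rfl⟩
      have h2 := hbounds i (alow i) ⟨alow, halow, i, rfl⟩
      linarith [h1.2, h2.1]
  calc (∑ i, v i (a i)) - (∑ i, v i (alow i))
      = ∑ i, (v i (a i) - v i (alow i)) := by rw [Finset.sum_sub_distrib]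
    _ ≤ ∑ i, (vtil i (a i) - vlow i (alow i)) := Finset.sum_le_sum fun i _ => key i
    _ = (∑ i, vtil i (a i)) - ∑ i, vlow i (alow i) := by rw [Finset.sum_sub_distrib]
    _ ≤ (∑ i, vtil i (atil i)) - ∑ i, vlow i (alow i) := by
        linarith [hatil_max a ha]
end

section
/- Exact convergence guarantee: if each bidder's true value lies within the reported bounds on all reported bundles and the convergence bound equals one, i.e. v̲(a̲) = ṽ(ã), then a̲ maximizes the true social welfare among all allocations in F_R: v(a) ≤ v(a̲) for every a ∈ F_R. -/
/-- Exact convergence guarantee: if each bidder's true value lies within the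
reported bounds on all reported bundles and the convergence bound equals one,
i.e. `v̲(a̲) = ṽ(ã)`, then `a̲` maximizes the true social welfare over `F_R`. -/
theorem exact_convergence_guarantee
    {N X : Type*} [Fintype N] [Nonempty N] [DecidableEq X]
    (FR : Finset (N → X)) (hFR : FR.Nonempty)
    (v vlow vup : N → X → ℝ)
    -- truthful bounds on all bundles appearing in allocations of F_R
    (hbounds : ∀ (i : N) (x : X), (∃ a ∈ FR, ∃ j : N, a j = x) →
      vlow i x ≤ v i x ∧ v i x ≤ vup i x)
    -- a̲ maximizes the total lower reported value over F_R
    (alow : N → X) (halow : alow ∈ FR)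
    (halow_max : ∀ a ∈ FR, (∑ i, vlow i (a i)) ≤ ∑ i, vlow i (alow i))
    -- ṽ is the perturbed valuation with respect to a̲
    (vtil : N → X → ℝ)
    (hvtil : ∀ (i : N) (x : X), vtil i x = if x = alow i then vlow i x else vup i x)
    -- ã maximizes the total perturbed valuation over F_R
    (atil : N → X) (hatil : atil ∈ FR)
    (hatil_max : ∀ a ∈ FR, (∑ i, vtil i (a i)) ≤ ∑ i, vtil i (atil i))
    -- the convergence bound equals one
    (hconv : (∑ i, vlow i (alow i)) = ∑ i, vtil i (atil i)) :
    ∀ a ∈ FR, (∑ i, v i (a i)) ≤ ∑ i, v i (alow i) := by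
  intro a ha
  have key : ∀ i, v i (a i) ≤ vtil i (a i) + (v i (alow i) - vlow i (alow i)) := by
    intro i
    have hb1 := hbounds i (a i) ⟨a, ha, i, rfl⟩
    have hb2 := hbounds i (alow i) ⟨alow, halow, i, rfl⟩
    rw [hvtil]
    by_cases h : a i = alow i
    · simp [h]
    · simp only [h, if_false]
      linarith [hb1.2, hb2.1]
  calc (∑ i, v i (a i))
      ≤ ∑ i, (vtil i (a i) + (v i (alow i) - vlow i (alow i))) :=
        Finset.sum_le_sum fun i _ => key i
    _ = (∑ i, vtil i (a i)) + ((∑ i, v i (alow i)) - ∑ i, vlow i (alow i)) := by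
        rw [Finset.sum_add_distrib, Finset.sum_sub_distrib]
    _ ≤ (∑ i, vtil i (atil i)) + ((∑ i, v i (alow i)) - ∑ i, vlow i (alow i)) := by
        linarith [hatil_max a ha]
    _ = ∑ i, v i (alow i) := by rw [← hconv]; ring
end

section
/- MRPAR convergence implies efficiency among reported allocations: suppose each bidder's true value lies within the reported bounds on its reported bundles, the provisional allocation a^α lies in F_R, every bidder i indicates a^α_i as its preferred bundle under MRPAR, i.e. v̲_i(a^α_i) − π(a^α_i) ≥ v̄_i(x) − π(x) for all reported bundles x ∈ R_i, and the supply condition π(a^α) ≥ π(a) holds for all a ∈ F_R. Then a^α maximizes the true social welfare over F_R: v(a) ≤ v(a^α) for every a ∈ F_R. -/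
/-- MRPAR convergence implies efficiency among reported allocations: if all
bidders' true values lie within their reported bounds, every bidder indicates the
provisional allocation `a^α` as its preferred bundle under MRPAR, and the supply
condition holds, then `a^α` maximizes the true social welfare over `F_R`. -/
theorem mrpar_convergence_efficiency
    {M N : Type*} [Fintype M] [DecidableEq M] [Fintype N] [Nonempty N]
    (R : N → Finset (Finset M))
    (v vlow vup : N → Finset M → ℝ)
    -- truthful bounds on reported bundles
    (hbounds : ∀ (i : N), ∀ x ∈ R i, vlow i x ≤ v i x ∧ v i x ≤ vup i x)
    (π : M → ℝ)
    (aα : N → Finset M)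
    -- a^α lies in F_R
    (haα_feas : ∀ i j : N, i ≠ j → Disjoint (aα i) (aα j))
    (haα_rep : ∀ i : N, aα i ∈ R i)
    -- every bidder indicates a^α_i as its preferred bundle under MRPAR
    (hmrpar : ∀ (i : N), ∀ x ∈ R i,
      vlow i (aα i) - (∑ j ∈ aα i, π j) ≥ vup i x - ∑ j ∈ x, π j)
    -- supply condition over F_R
    (hsupply : ∀ a : N → Finset M,
      (∀ i j : N, i ≠ j → Disjoint (a i) (a j)) → (∀ i : N, a i ∈ R i) →
      (∑ i, ∑ j ∈ aα i, π j) ≥ ∑ i, ∑ j ∈ a i, π j) :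
    ∀ a : N → Finset M,
      (∀ i j : N, i ≠ j → Disjoint (a i) (a j)) → (∀ i : N, a i ∈ R i) →
      (∑ i, v i (a i)) ≤ ∑ i, v i (aα i) := by
  intro a hfeas hrep
  have key : ∀ i : N, v i (a i) ≤ v i (aα i) + (∑ j ∈ a i, π j) - ∑ j ∈ aα i, π j := by
    intro i
    have h1 := (hbounds i (a i) (hrep i)).2
    have h2 := (hbounds i (aα i) (haα_rep i)).1
    have h3 := hmrpar i (a i) (hrep i)
    linarith
  calc ∑ i, v i (a i) ≤ ∑ i, (v i (aα i) + (∑ j ∈ a i, π j) - ∑ j ∈ aα i, π j) :=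
        Finset.sum_le_sum fun i _ => key i
    _ = ∑ i, v i (aα i) + (∑ i, ∑ j ∈ a i, π j) - ∑ i, ∑ j ∈ aα i, π j := by
        simp [Finset.sum_add_distrib, Finset.sum_sub_distrib]
    _ ≤ ∑ i, v i (aα i) := by
        have := hsupply a hfeas hrep
        linarith
end

section
/- Efficiency loss of δ-approximate clearing prices: suppose for each bidder i and each reported bundle x ∈ R_i the approximate demand condition v̂_i(a^α_i) − π(a^α_i) + δ ≥ v̂_i(x) − π(x) holds, where δ ≥ 0 bounds all clearing-condition violations δ_{ik}, and the supply condition π(a^α) ≥ π(a) holds for all a ∈ F_R, with a^α ∈ F_R. Then for every allocation a ∈ F_R, v̂(a) ≤ v̂(a^α) + n·δ, where n is the number of bidders. -/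
/-- Efficiency loss of δ-approximate clearing prices: if the approximate demand
condition holds with slack `δ ≥ 0` for every bidder and every reported bundle,
and the supply condition holds over `F_R`, then every allocation in `F_R` has
valuation at most `v̂(a^α) + n·δ`, where `n` is the number of bidders. -/
theorem approx_clearing_prices_efficiency_loss
    {M N : Type*} [Fintype M] [DecidableEq M] [Fintype N] [Nonempty N]
    (R : N → Finset (Finset M))
    (vhat : N → Finset M → ℝ)
    (π : M → ℝ)
    (δ : ℝ) (hδ : 0 ≤ δ)
    (aα : N → Finset M)
    -- a^α lies in F_R
    (haα_feas : ∀ i j : N, i ≠ j → Disjoint (aα i) (aα j))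
    (haα_rep : ∀ i : N, aα i ∈ R i)
    -- approximate demand condition for each bidder and each reported bundle
    (hdemand : ∀ (i : N), ∀ x ∈ R i,
      vhat i (aα i) - (∑ j ∈ aα i, π j) + δ ≥ vhat i x - ∑ j ∈ x, π j)
    -- supply condition over F_R
    (hsupply : ∀ a : N → Finset M,
      (∀ i j : N, i ≠ j → Disjoint (a i) (a j)) → (∀ i : N, a i ∈ R i) →
      (∑ i, ∑ j ∈ aα i, π j) ≥ ∑ i, ∑ j ∈ a i, π j) :
    ∀ a : N → Finset M,
      (∀ i j : N, i ≠ j → Disjoint (a i) (a j)) → (∀ i : N, a i ∈ R i) →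
      (∑ i, vhat i (a i)) ≤ (∑ i, vhat i (aα i)) + (Fintype.card N : ℝ) * δ := by
  intro a hfeas hrep
  have h1 : ∑ i, (vhat i (a i) - ∑ j ∈ a i, π j) ≤
      ∑ i, (vhat i (aα i) - (∑ j ∈ aα i, π j) + δ) :=
    Finset.sum_le_sum fun i _ => hdemand i (a i) (hrep i)
  have h2 := hsupply a hfeas hrep
  simp only [Finset.sum_sub_distrib, Finset.sum_add_distrib, Finset.sum_const,
    Finset.card_univ, nsmul_eq_mul] at h1
  linarith
end
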